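/- arXiv:2105.07616 — 6 statements merged into one kernel-verified Lean document; each statement's English description precedes it below -/
import Mathlib

section
/- For every c > 0, lim_{t→∞} η(ct)/η(t) = 1. -/
open Set Filter Topology

/-- Hypotheses (P1)–(P3) on `φ(t) = η(t)·t`. -/
def PhiHyp (φ η : ℝ → ℝ) (Lam0 : ℝ) : Prop :=
  (∀ t : ℝ, 0 ≤ t → φ t = η t * t) ∧
  (∀ t : ℝ, 0 ≤ t → 1 ≤ η t) ∧
  MonotoneOn φ (Set.Ici 0) ∧
  (∀ t₀ : ℝ, 0 < t₀ → ∃ ε > (0 : ℝ), ∃ K : NNReal,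
    LipschitzOnWith K φ (Set.Ioo (t₀ - ε) (t₀ + ε))) ∧
  (∀ t : ℝ, 0 ≤ t → t ≤ φ t) ∧
  AntitoneOn η (Set.Ioo 0 1) ∧
  MonotoneOn η (Set.Ici 1) ∧
  (∃ T : ℝ, ∀ t : ℝ, T ≤ t → DifferentiableAt ℝ η t) ∧
  Filter.Tendsto (fun t => t * deriv η t / η t * Real.log (η t)) Filter.atTop (nhds 0) ∧
  0 < Lam0 ∧
  (∀ s t : ℝ, 0 < s → 0 < t → η (s * t) ≤ Lam0 * η s * η t)

/-!
Since `η` is nondecreasing on `[1, ∞)`, either it converges to a limit `L ≥ 1`, and then the ratio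
tends to `L / L = 1`, or it tends to infinity. In the latter case `log η → ∞`, so (P2) forces the
elasticity `t η'(t) / η(t)` to tend to `0`. This elasticity is the derivative of
`F(x) = log η(eˣ)`, so by the mean value theorem `F(x + log c) - F(x) → 0`, which is
`log (η(ct) / η(t)) → 0` at `x = log t`.
-/

theorem MonotoneOn.tendsto_atTop_or_tendsto_nhds {ι α : Type*} [LinearOrder ι]
    [TopologicalSpace α] [ConditionallyCompleteLinearOrder α] [OrderTopology α]
    {f : ι → α} {a : ι} (hf : MonotoneOn f (Ici a)) :
    Tendsto f atTop atTop ∨ ∃ l, Tendsto f atTop (𝓝 l) := by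
  have hmono : Monotone fun t => f (max t a) := fun s t hst =>
    hf (le_max_right s a) (le_max_right t a) (max_le_max hst le_rfl)
  have heq : (fun t => f (max t a)) =ᶠ[atTop] f := by
    filter_upwards [eventually_ge_atTop a] with t ht
    rw [max_eq_left ht]
  refine (tendsto_atTop_of_monotone hmono).imp (fun h => h.congr' heq) ?_
  exact fun ⟨l, hl⟩ => ⟨l, hl.congr' heq⟩

theorem tendsto_div_comp_const_mul_of_tendsto {f : ℝ → ℝ} {L c : ℝ}
    (hf : Tendsto f atTop (𝓝 L)) (hL : L ≠ 0) (hc : 0 < c) :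
    Tendsto (fun t => f (c * t) / f t) atTop (𝓝 1) := by
  have hfc : Tendsto (fun t => f (c * t)) atTop (𝓝 L) :=
    hf.comp (tendsto_id.const_mul_atTop hc)
  rw [← div_self hL]
  exact hfc.div hf hL

theorem tendsto_sub_comp_add_of_hasDerivAt {E : Type*} [NormedAddCommGroup E]
    [NormedSpace ℝ E] {f f' : ℝ → E} (hf : ∀ᶠ x in atTop, HasDerivAt f (f' x) x)
    (hf' : Tendsto f' atTop (𝓝 0)) (a : ℝ) :
    Tendsto (fun x => f (x + a) - f x) atTop (𝓝 0) := by
  rw [Metric.tendsto_nhds]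
  intro ε hε
  set δ := ε / (|a| + 1)
  have hδ : 0 < δ := by positivity
  obtain ⟨N, hN⟩ := eventually_atTop.1
    (hf.and (hf'.eventually (Metric.closedBall_mem_nhds 0 hδ)))
  filter_upwards [eventually_ge_atTop (N + |a|)] with x hx
  have hxN : x ∈ Ici N := by simp only [mem_Ici]; linarith [abs_nonneg a]
  have hxaN : x + a ∈ Ici N := by simp only [mem_Ici]; linarith [neg_abs_le a]
  have hmv := (convex_Ici N).norm_image_sub_le_of_norm_hasDerivWithin_le
    (fun y hy => (hN y hy).1.hasDerivWithinAt)
    (fun y hy => by simpa using (hN y hy).2) hxN hxaN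
  rw [dist_zero_right]
  calc ‖f (x + a) - f x‖ ≤ δ * ‖x + a - x‖ := hmv
    _ = δ * |a| := by rw [add_sub_cancel_left, Real.norm_eq_abs]
    _ < ε := by
      rw [div_mul_eq_mul_div, div_lt_iff₀ (by positivity)]
      nlinarith [abs_nonneg a]

theorem tendsto_div_comp_const_mul_of_elasticity_tendsto_zero {f : ℝ → ℝ}
    (hpos : ∀ᶠ t in atTop, 0 < f t) (hdiff : ∀ᶠ t in atTop, DifferentiableAt ℝ f t)
    (helast : Tendsto (fun t => t * deriv f t / f t) atTop (𝓝 0)) {c : ℝ} (hc : 0 < c) :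
    Tendsto (fun t => f (c * t) / f t) atTop (𝓝 1) := by
  set F : ℝ → ℝ := fun x => Real.log (f (Real.exp x))
  have hF : ∀ᶠ x in atTop,
      HasDerivAt F (Real.exp x * deriv f (Real.exp x) / f (Real.exp x)) x := by
    filter_upwards [Real.tendsto_exp_atTop.eventually hpos,
      Real.tendsto_exp_atTop.eventually hdiff] with x hx hxd
    convert (hxd.hasDerivAt.comp x (Real.hasDerivAt_exp x)).log hx.ne' using 1
    · rfl
    · rw [Function.comp_apply, mul_comm (Real.exp x)]
  have hshift := (tendsto_sub_comp_add_of_hasDerivAt hF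
    (helast.comp Real.tendsto_exp_atTop) (Real.log c)).comp Real.tendsto_log_atTop
  refine (Real.exp_zero ▸ (Real.continuous_exp.tendsto 0).comp hshift).congr' ?_
  filter_upwards [eventually_gt_atTop 0, hpos, tendsto_id.const_mul_atTop hc |>.eventually hpos]
    with t ht hft hfct
  simp only [Function.comp_apply, F, Real.exp_add, Real.exp_log ht, Real.exp_log hc,
    mul_comm t c, Real.exp_sub, Real.exp_log hft, Real.exp_log (show 0 < f (c * t) from hfct)]

/-- Lemma 2.4 (i): for every `c > 0`, `lim_{t→∞} η(ct)/η(t) = 1`. -/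
theorem statement1 (φ η : ℝ → ℝ) (Lam0 : ℝ) (hφ : PhiHyp φ η Lam0) :
    ∀ c : ℝ, 0 < c →
      Filter.Tendsto (fun t => η (c * t) / η t) Filter.atTop (nhds 1) := by
  obtain ⟨-, hη1, -, -, -, -, hmono, ⟨T, hdiff⟩, hlim, -, -⟩ := hφ
  intro c hc
  have hη1' : ∀ᶠ t in atTop, 1 ≤ η t := eventually_ge_atTop 0 |>.mono hη1
  rcases hmono.tendsto_atTop_or_tendsto_nhds with hη | ⟨L, hL⟩
  · have hlog : Tendsto (fun t => Real.log (η t)) atTop atTop := Real.tendsto_log_atTop.comp hη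
    have helast : Tendsto (fun t => t * deriv η t / η t) atTop (𝓝 0) := by
      refine (hlim.div_atTop hlog).congr' ?_
      filter_upwards [hlog.eventually_gt_atTop 0] with t ht
      exact mul_div_cancel_right₀ _ ht.ne'
    exact tendsto_div_comp_const_mul_of_elasticity_tendsto_zero
      (hη1'.mono fun t ht => one_pos.trans_le ht) (eventually_atTop.2 ⟨T, hdiff⟩) helast hc
  · have hL1 : 1 ≤ L := ge_of_tendsto hL hη1'
    exact tendsto_div_comp_const_mul_of_tendsto hL (by positivity) hc
end

section
/- For every γ > 0, lim_{t→∞} η(t)/t^γ = 0. -/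
open Set Filter Topology

/-! With `F(s) = (log η(eˢ))²`, hypothesis (P2) says exactly that `F'(s) → 0`, so `F` grows at most
linearly: `(log η t)² ≤ C + log t` for large `t`. Hence `log η = o(log)`, i.e. `η(t) = t^{o(1)}`. -/

open Asymptotics Real

theorem eventually_le_add_mul_of_hasDerivAt_le {f f' : ℝ → ℝ} {c : ℝ}
    (hf : ∀ᶠ x in atTop, HasDerivAt f (f' x) x) (hf' : ∀ᶠ x in atTop, f' x ≤ c) :
    ∃ C, ∀ᶠ x in atTop, f x ≤ C + c * x := by
  obtain ⟨a, ha⟩ := eventually_atTop.1 (hf.and hf')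
  have hderiv : ∀ x ∈ Ici a, deriv f x ≤ c := fun x hx => (ha x hx).1.deriv ▸ (ha x hx).2
  refine ⟨f a - c * a, eventually_atTop.2 ⟨a, fun x hx => ?_⟩⟩
  have := (convex_Ici a).image_sub_le_mul_sub_of_deriv_le
    (fun y hy => (ha y hy).1.continuousAt.continuousWithinAt)
    (fun y hy => (ha y (interior_subset hy)).1.differentiableAt.differentiableWithinAt)
    (fun y hy => hderiv y (interior_subset hy)) a self_mem_Ici x hx hx
  linarith

theorem isLittleO_of_sq_le_add {α : Type*} {l : Filter α} {u v : α → ℝ} {C : ℝ}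
    (hv : Tendsto v l atTop) (h : ∀ᶠ x in l, u x ^ 2 ≤ C + v x) : u =o[l] v := by
  have hsq : (u ^ 2) =O[l] v := by
    refine IsBigO.of_bound 2 ?_
    filter_upwards [h, hv.eventually_ge_atTop C, hv.eventually_ge_atTop 0] with x hx hC h0
    rw [Pi.pow_apply, norm_pow, Real.norm_eq_abs, sq_abs, Real.norm_eq_abs, abs_of_nonneg h0]
    linarith
  have hv2 : v =o[l] (v ^ 2) := by
    have := (isLittleO_pow_pow_atTop_of_lt (𝕜 := ℝ) (p := 1) one_lt_two).comp_tendsto hv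
    simp only [pow_one] at this
    exact this
  exact (hsq.trans_isLittleO hv2).of_pow two_ne_zero

theorem tendsto_div_rpow_atTop_of_isLittleO_log {g : ℝ → ℝ} {γ : ℝ} (hγ : 0 < γ)
    (hg : ∀ᶠ t in atTop, 0 < g t) (h : (fun t => log (g t)) =o[atTop] log) :
    Tendsto (fun t => g t / t ^ γ) atTop (𝓝 0) := by
  refine tendsto_of_tendsto_of_tendsto_of_le_of_le' tendsto_const_nhds
    (tendsto_rpow_neg_atTop (half_pos hγ)) ?_ ?_
  · filter_upwards [hg, eventually_gt_atTop 0] with t hgt ht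
    positivity
  · filter_upwards [hg, eventually_gt_atTop 0, eventually_ge_atTop 1, h.bound (half_pos hγ)]
      with t hgt ht ht1 hbound
    rw [Real.norm_eq_abs, Real.norm_eq_abs, abs_of_nonneg (log_nonneg ht1)] at hbound
    have hlog : log (g t) - γ * log t ≤ -(γ / 2) * log t := by linarith [le_abs_self (log (g t))]
    calc g t / t ^ γ = exp (log (g t) - γ * log t) := by
          rw [exp_sub, exp_log hgt, mul_comm, rpow_def_of_pos ht]
      _ ≤ exp (-(γ / 2) * log t) := exp_le_exp.2 hlog
      _ = t ^ (-(γ / 2)) := by rw [mul_comm, rpow_def_of_pos ht]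

section LogElasticity

variable {g : ℝ → ℝ}

theorem hasDerivAt_sq_log_comp_exp {s : ℝ} (hd : DifferentiableAt ℝ g (exp s))
    (hpos : 0 < g (exp s)) :
    HasDerivAt (fun s => log (g (exp s)) ^ 2)
      (2 * (exp s * deriv g (exp s) / g (exp s) * log (g (exp s)))) s := by
  have := ((hd.hasDerivAt.comp s (hasDerivAt_exp s)).log hpos.ne').pow 2
  exact this.congr_deriv (by simp only [Function.comp_apply]; ring)

theorem isLittleO_log_comp_log
    (hd : ∀ᶠ t in atTop, DifferentiableAt ℝ g t) (hpos : ∀ᶠ t in atTop, 0 < g t)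
    (hlim : Tendsto (fun t => t * deriv g t / g t * log (g t)) atTop (𝓝 0)) :
    (fun t => log (g t)) =o[atTop] log := by
  have hexp := tendsto_exp_atTop
  obtain ⟨C, hC⟩ := eventually_le_add_mul_of_hasDerivAt_le (c := 1)
    (f := fun s => log (g (exp s)) ^ 2)
    (hexp.eventually (hd.and hpos) |>.mono fun s hs => hasDerivAt_sq_log_comp_exp hs.1 hs.2)
    (hexp.eventually ((hlim.const_mul 2).eventually (gt_mem_nhds (by norm_num : (2 : ℝ) * 0 < 1)))
      |>.mono fun s hs => hs.le)
  refine isLittleO_of_sq_le_add (C := C) tendsto_log_atTop ?_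
  filter_upwards [tendsto_log_atTop.eventually hC, eventually_gt_atTop 0] with t ht ht0
  simpa only [exp_log ht0, one_mul] using ht

end LogElasticity

/-- Lemma 2.4 (ii): for every `γ > 0`, `lim_{t→∞} η(t)/t^γ = 0`. -/
theorem statement2 (φ η : ℝ → ℝ) (Lam0 : ℝ) (hφ : PhiHyp φ η Lam0) :
    ∀ γ : ℝ, 0 < γ →
      Filter.Tendsto (fun t : ℝ => η t / t ^ γ) Filter.atTop (nhds 0) := by
  obtain ⟨-, hη1, -, -, -, -, -, ⟨T, hT⟩, hlim, -, -⟩ := hφ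
  intro γ hγ
  have hpos : ∀ᶠ t in atTop, 0 < η t :=
    (eventually_ge_atTop 0).mono fun t ht => one_pos.trans_le (hη1 t ht)
  exact tendsto_div_rpow_atTop_of_isLittleO_log hγ hpos
    (isLittleO_log_comp_log (eventually_atTop.2 ⟨T, hT⟩) hpos hlim)
end

section
/- There is a constant Λ₁ such that for every t > 0 one has η(η(t)·t) ≤ Λ₁·η(t). -/
open Set Filter Topology

/-!
For large `t` the function `F(t) = (log η(t))² - 2 log t` is nonincreasing, because
`F'(t) = (2/t)·(t η'(t)/η(t) · log η(t) - 1)` and the bracket is eventually negative by (P2).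
Comparing `F` at `t ≤ η(t)·t` gives `(log η(η(t)·t))² ≤ (log η(t))² + 2 log η(t) ≤ (log η(t) + 1)²`,
that is `η(η(t)·t) ≤ e·η(t)`. On a bounded range `(0, T]` the monotonicity of `φ` and of `η`
on each side of `1` bound `η(η(t)·t)` by `max (η t) (η(φ(T)))`.
-/

open Real

theorem hasDerivAt_sq_log_sub_two_log {η : ℝ → ℝ} {x : ℝ} (hx : 0 < x) (hηx : 0 < η x)
    (hd : DifferentiableAt ℝ η x) :
    HasDerivAt (fun t => log (η t) ^ 2 - 2 * log t)
      (2 / x * (x * deriv η x / η x * log (η x) - 1)) x := by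
  refine (((hd.hasDerivAt.log hηx.ne').pow 2).sub
    ((hasDerivAt_log hx.ne').const_mul 2)).congr_deriv ?_
  field_simp
  ring

theorem antitoneOn_sq_log_sub_two_log {η : ℝ → ℝ} {T : ℝ} (hT : 0 < T)
    (hpos : ∀ t ∈ Ici T, 0 < η t) (hdiff : ∀ t ∈ Ici T, DifferentiableAt ℝ η t)
    (hle : ∀ t ∈ Ici T, t * deriv η t / η t * log (η t) ≤ 1) :
    AntitoneOn (fun t => log (η t) ^ 2 - 2 * log t) (Ici T) := by
  have hF : ∀ x ∈ Ici T, HasDerivAt (fun t => log (η t) ^ 2 - 2 * log t)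
      (2 / x * (x * deriv η x / η x * log (η x) - 1)) x := fun x hx =>
    hasDerivAt_sq_log_sub_two_log (hT.trans_le hx) (hpos x hx) (hdiff x hx)
  refine antitoneOn_of_hasDerivWithinAt_nonpos (convex_Ici T)
    (fun x hx => (hF x hx).continuousAt.continuousWithinAt)
    (fun x hx => (hF x (interior_subset hx)).hasDerivWithinAt) fun x hx => ?_
  rw [interior_Ici] at hx
  exact mul_nonpos_of_nonneg_of_nonpos (div_nonneg zero_le_two (hT.trans hx).le)
    (sub_nonpos.2 (hle x (mem_Ici.2 hx.le)))

theorem le_exp_one_mul_of_antitoneOn {η : ℝ → ℝ} {T : ℝ} (hT : 0 < T)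
    (hη : ∀ t, 0 < t → 1 ≤ η t)
    (hF : AntitoneOn (fun t => log (η t) ^ 2 - 2 * log t) (Ici T)) {t : ℝ} (ht : T ≤ t) :
    η (η t * t) ≤ exp 1 * η t := by
  have ht0 : 0 < t := hT.trans_le ht
  have hηt : 0 < η t := one_pos.trans_le (hη t ht0)
  have hle : t ≤ η t * t := le_mul_of_one_le_left ht0.le (hη t ht0)
  have hηs : 0 < η (η t * t) := one_pos.trans_le (hη _ (mul_pos hηt ht0))
  have hFle := hF ht (ht.trans hle) hle
  simp only [log_mul hηt.ne' ht0.ne'] at hFle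
  have ha : 0 ≤ log (η (η t * t)) := log_nonneg (hη _ (mul_pos hηt ht0))
  have hb : 0 ≤ log (η t) := log_nonneg (hη t ht0)
  have hab : log (η (η t * t)) ≤ log (η t) + 1 := by nlinarith
  calc η (η t * t) = exp (log (η (η t * t))) := (exp_log hηs).symm
    _ ≤ exp (log (η t) + 1) := exp_le_exp.2 hab
    _ = exp 1 * η t := by rw [exp_add, exp_log hηt, mul_comm]

theorem apply_mul_self_le_max_of_le {η : ℝ → ℝ} {T t : ℝ} (ht : 0 < t) (htT : t ≤ T)
    (hη : ∀ t, 0 < t → 1 ≤ η t) (hφ : MonotoneOn (fun t => η t * t) (Ici 0))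
    (hanti : AntitoneOn η (Ioo 0 1)) (hmono : MonotoneOn η (Ici 1)) :
    η (η t * t) ≤ max (η t) (η (η T * T)) := by
  have hle : t ≤ η t * t := le_mul_of_one_le_left ht.le (hη t ht)
  rcases lt_or_ge (η t * t) 1 with hlt | hge
  · exact le_max_of_le_left <|
      hanti ⟨ht, hle.trans_lt hlt⟩ ⟨ht.trans_le hle, hlt⟩ hle
  · have hφT : η t * t ≤ η T * T := hφ ht.le (ht.le.trans htT) htT
    exact le_max_of_le_right <| hmono hge (hge.trans hφT) hφT

/-- Lemma 2.4 (iii): there is `Λ₁` such that `η(η(t)·t) ≤ Λ₁·η(t)` for all `t > 0`. -/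
theorem statement3 (φ η : ℝ → ℝ) (Lam0 : ℝ) (hφ : PhiHyp φ η Lam0) :
    ∃ Lam1 : ℝ, ∀ t : ℝ, 0 < t → η (η t * t) ≤ Lam1 * η t := by
  obtain ⟨hφη, hη1, hφmono, -, -, hanti, hmono, ⟨Td, hdiff⟩, htend, -, -⟩ := hφ
  have hη : ∀ t, 0 < t → 1 ≤ η t := fun t ht => hη1 t ht.le
  obtain ⟨T, hT⟩ := eventually_atTop.1 <| (eventually_ge_atTop 1).and <|
    (eventually_ge_atTop Td).and (htend.eventually (eventually_le_nhds one_pos))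
  have hT0 : 0 < T := one_pos.trans_le (hT T le_rfl).1
  have hF := antitoneOn_sq_log_sub_two_log hT0
    (fun t ht => one_pos.trans_le (hη t (hT0.trans_le ht)))
    (fun t ht => hdiff t (hT t ht).2.1) (fun t ht => (hT t ht).2.2)
  have hφ' : MonotoneOn (fun t => η t * t) (Ici 0) := fun s hs t ht hst => by
    simpa only [hφη s hs, hφη t ht] using hφmono hs ht hst
  set C := η (η T * T)
  have hM : 1 ≤ max (exp 1) C :=
    (hη _ (mul_pos (one_pos.trans_le (hη T hT0)) hT0)).trans (le_max_right _ _)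
  refine ⟨max (exp 1) C, fun t ht => ?_⟩
  have hηt : 0 ≤ η t := zero_le_one.trans (hη t ht)
  rcases le_total T t with hTt | htT
  · exact (le_exp_one_mul_of_antitoneOn hT0 hη hF hTt).trans <|
      mul_le_mul_of_nonneg_right (le_max_left _ _) hηt
  · calc η (η t * t) ≤ max (η t) C := apply_mul_self_le_max_of_le ht htT hη hφ' hanti hmono
      _ ≤ max (exp 1) C * η t := max_le (le_mul_of_one_le_left hηt hM)
          ((le_max_right _ _).trans (le_mul_of_one_le_right (zero_le_one.trans hM) (hη t ht)))
end

section
/- There is a constant Λ₂ such that for every t > 0 and every 0 < r < s one has r·η(t/r) ≤ Λ₂·s·η(t/s). -/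
/-! With `g = log η`, hypothesis (P2) says `(g²)' = 2 g g' ≤ 2 / t` for `t ≥ T`, so
`g² - 2 log` is nonincreasing there and `g(u) ≤ 1 + |g(T)| + log u`; hence `η(u) ≤ C u` for `u ≥ 1`.
Writing `t / r = (s / r) · (t / s)`, submultiplicativity (P3) then gives
`r η(t / r) ≤ Λ₀ r η(s / r) η(t / s) ≤ Λ₀ C s η(t / s)`. -/

open Set Filter Topology

open Real

lemma sq_sub_two_mul_log_antitoneOn {g : ℝ → ℝ} {T : ℝ} (hT : 0 < T)
    (hg : ∀ t, T ≤ t → DifferentiableAt ℝ g t)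
    (hgg' : ∀ t, T ≤ t → t * deriv g t * g t ≤ 1) :
    AntitoneOn (fun t => g t ^ 2 - 2 * log t) (Ici T) := by
  have hderiv : ∀ t, T ≤ t →
      HasDerivAt (fun t => g t ^ 2 - 2 * log t) (2 * g t * deriv g t - 2 * t⁻¹) t := by
    intro t ht
    have hsq := (hg t ht).hasDerivAt.fun_pow 2
    have hlog := (hasDerivAt_log (hT.trans_le ht).ne').const_mul 2
    exact (hsq.fun_sub hlog).congr_deriv (by norm_num)
  refine antitoneOn_of_deriv_nonpos (convex_Ici T)
    (fun t ht => (hderiv t ht).continuousAt.continuousWithinAt)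
    (fun t ht => (hderiv t (interior_subset ht)).differentiableAt.differentiableWithinAt)
    fun t ht => ?_
  rw [interior_Ici] at ht
  have ht0 : 0 < t := hT.trans ht
  rw [(hderiv t ht.le).deriv, sub_nonpos, ← div_eq_mul_inv, le_div_iff₀ ht0]
  linarith [hgg' t ht.le]

lemma le_add_log_of_tendsto {g : ℝ → ℝ} (hg : ∀ᶠ t in atTop, DifferentiableAt ℝ g t)
    (hgg' : Tendsto (fun t => t * deriv g t * g t) atTop (𝓝 0)) :
    ∃ T, 1 ≤ T ∧ ∀ x, T ≤ x → g x ≤ 1 + |g T| + log x := by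
  obtain ⟨T, hT⟩ := eventually_atTop.1
    (((eventually_ge_atTop 1).and hg).and (hgg'.eventually (eventually_le_nhds one_pos)))
  have hT1 : 1 ≤ T := (hT T le_rfl).1.1
  refine ⟨T, hT1, fun x hx => ?_⟩
  have hanti : g x ^ 2 - 2 * log x ≤ g T ^ 2 - 2 * log T :=
    sq_sub_two_mul_log_antitoneOn (zero_lt_one.trans_le hT1)
      (fun t ht => (hT t ht).1.2) (fun t ht => (hT t ht).2) self_mem_Ici (mem_Ici.2 hx) hx
  have hlogT : 0 ≤ log T := log_nonneg hT1
  have hlogx : 0 ≤ log x := log_nonneg (hT1.trans hx)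
  have hsq : g x ^ 2 ≤ (1 + |g T| + log x) ^ 2 := by
    nlinarith [sq_abs (g T), abs_nonneg (g T)]
  exact (le_abs_self _).trans (abs_le_of_sq_le_sq hsq (by positivity))

lemma exists_le_mul_of_tendsto {η : ℝ → ℝ} (hpos : ∀ t, 1 ≤ t → 0 < η t)
    (hmono : MonotoneOn η (Ici 1)) (hdiff : ∃ T, ∀ t, T ≤ t → DifferentiableAt ℝ η t)
    (htend : Tendsto (fun t => t * deriv η t / η t * log (η t)) atTop (𝓝 0)) :
    ∃ C, ∀ u, 1 ≤ u → η u ≤ C * u := by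
  obtain ⟨T₀, hT₀⟩ := hdiff
  have hlogdiff : ∀ᶠ t in atTop, DifferentiableAt ℝ (fun t => log (η t)) t := by
    filter_upwards [eventually_ge_atTop T₀, eventually_ge_atTop 1] with t ht ht1
    exact (hT₀ t ht).log (hpos t ht1).ne'
  have hlogtend :
      Tendsto (fun t => t * deriv (fun t => log (η t)) t * log (η t)) atTop (𝓝 0) := by
    refine htend.congr' ?_
    filter_upwards [eventually_ge_atTop T₀, eventually_ge_atTop 1] with t ht ht1
    rw [deriv.log (hT₀ t ht) (hpos t ht1).ne', mul_div_assoc]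
  obtain ⟨T, hT1, hle⟩ := le_add_log_of_tendsto hlogdiff hlogtend
  refine ⟨exp (1 + |log (η T)|), fun u hu => ?_⟩
  have hu0 : 0 < u := zero_lt_one.trans_le hu
  have hηT : 0 < η T := hpos T hT1
  rcases le_total u T with huT | hTu
  · calc η u ≤ η T := hmono hu hT1 huT
      _ = exp (log (η T)) := (exp_log hηT).symm
      _ ≤ exp (1 + |log (η T)|) * 1 := by
          rw [mul_one]
          exact exp_le_exp.2 (by linarith [le_abs_self (log (η T))])
      _ ≤ exp (1 + |log (η T)|) * u := by gcongr
  · calc η u = exp (log (η u)) := (exp_log (hpos u hu)).symm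
      _ ≤ exp (1 + |log (η T)| + log u) := exp_le_exp.2 (hle u hTu)
      _ = exp (1 + |log (η T)|) * u := by rw [exp_add, exp_log hu0]

/-- Lemma 2.4 (iv): there is `Λ₂` such that `r·η(t/r) ≤ Λ₂·s·η(t/s)` for all
`t > 0` and `0 < r < s`. -/
theorem statement4 (φ η : ℝ → ℝ) (Lam0 : ℝ) (hφ : PhiHyp φ η Lam0) :
    ∃ Lam2 : ℝ, ∀ t r s : ℝ, 0 < t → 0 < r → r < s →
      r * η (t / r) ≤ Lam2 * s * η (t / s) := by
  obtain ⟨-, hη1, -, -, -, -, hmono, hdiff, htend, hLam0, hsub⟩ := hφ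
  obtain ⟨C, hC⟩ := exists_le_mul_of_tendsto
    (fun u hu => zero_lt_one.trans_le (hη1 u (zero_le_one.trans hu))) hmono hdiff htend
  refine ⟨Lam0 * C, fun t r s ht hr hrs => ?_⟩
  have hs : 0 < s := hr.trans hrs
  have hsr : 1 ≤ s / r := (one_le_div hr).2 hrs.le
  have hηts : 0 ≤ η (t / s) := zero_le_one.trans (hη1 _ (div_pos ht hs).le)
  calc r * η (t / r) = r * η (s / r * (t / s)) := by
        rw [mul_comm (s / r), div_mul_div_cancel₀ hs.ne']
    _ ≤ r * (Lam0 * η (s / r) * η (t / s)) := by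
        gcongr; exact hsub _ _ (div_pos hs hr) (div_pos ht hs)
    _ ≤ r * (Lam0 * (C * (s / r)) * η (t / s)) := by gcongr; exact hC _ hsr
    _ = Lam0 * C * s * η (t / s) := by field_simp
end

section
/- Let L > 1 and L₂ > 0, and set a_k = 1/(k·L₂·(η(L^k)+1)) for integers k ≥ 1. Then there exists an integer k₁ ≥ 4 such that a_k/a_{k+1} ≤ 2 for every k ≥ k₁, i.e. sup_{k ≥ k₁} a_k/a_{k+1} ≤ 2. -/
open Set Filter Topology

/-!
Condition (P2) says that `t · (d/dt) (log η(t))² = 2 · (t η'(t)/η(t)) · log η(t)` tends to `0`,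
so `(log η)²` grows more slowly than any multiple of `log t`: for every `ε > 0`,
`(log η(t))² - 2ε log t` is eventually nonincreasing. Comparing `t` with `L t` gives
`(log η(L t))² ≤ (log η(t))² + 2ε log L`, hence `η(L t) ≤ r η(t)` for any prescribed `r > 1`
once `t` is large. With `r = 3/2` and `t = L^k` this bounds `η(L^(k+1)) / η(L^k)`, while
`(k + 1)/k ≤ 4/3` for `k ≥ 3`; the two factors multiply to `2`.
-/

open Real

theorem antitoneOn_sq_log_sub_mul_log {f : ℝ → ℝ} {T ε : ℝ} (hT : 0 < T)
    (hf : ∀ t, T ≤ t → DifferentiableAt ℝ f t) (hpos : ∀ t, T ≤ t → 0 < f t)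
    (hbound : ∀ t, T ≤ t → t * deriv f t / f t * log (f t) ≤ ε) :
    AntitoneOn (fun t => log (f t) ^ 2 - 2 * ε * log t) (Ici T) := by
  have hderiv : ∀ t ∈ Ici T, HasDerivAt (fun t => log (f t) ^ 2 - 2 * ε * log t)
      (2 / t * (t * deriv f t / f t * log (f t) - ε)) t := by
    intro t ht
    have ht0 : t ≠ 0 := (hT.trans_le ht).ne'
    have hlog := ((hf t ht).hasDerivAt.log (hpos t ht).ne').fun_pow 2
    refine (hlog.sub ((hasDerivAt_log ht0).const_mul (2 * ε))).congr_deriv ?_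
    field_simp
    ring
  refine antitoneOn_of_hasDerivWithinAt_nonpos (convex_Ici T)
    (fun t ht => (hderiv t ht).continuousAt.continuousWithinAt)
    (fun t ht => (hderiv t (interior_subset ht)).hasDerivWithinAt) fun t ht => ?_
  rw [interior_Ici] at ht
  exact mul_nonpos_of_nonneg_of_nonpos (by positivity [hT.trans ht])
    (sub_nonpos.mpr (hbound t ht.le))

theorem eventually_le_mul_of_tendsto_mul_deriv_mul_log {η : ℝ → ℝ}
    (hη : ∀ t, 0 ≤ t → 1 ≤ η t) (hdiff : ∃ T, ∀ t, T ≤ t → DifferentiableAt ℝ η t)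
    (hlim : Tendsto (fun t => t * deriv η t / η t * log (η t)) atTop (𝓝 0))
    {L r : ℝ} (hL : 1 ≤ L) (hr : 1 < r) :
    ∀ᶠ t in atTop, η (L * t) ≤ r * η t := by
  have hpos : ∀ t, 0 ≤ t → 0 < η t := fun t ht => one_pos.trans_le (hη t ht)
  have hlogη : ∀ t, 0 ≤ t → 0 ≤ log (η t) := fun t ht => log_nonneg (hη t ht)
  have hlogL : 0 ≤ log L := log_nonneg hL
  have hlogr : 0 < log r := log_pos hr
  set ε := log r ^ 2 / (2 * (log L + 1)) with hε_def
  have hε : 0 < ε := by positivity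
  have hεL : 2 * ε * log L ≤ log r ^ 2 := by
    rw [hε_def, show 2 * (log r ^ 2 / (2 * (log L + 1))) * log L
      = log r ^ 2 * (log L / (log L + 1)) by field_simp]
    exact mul_le_of_le_one_right (sq_nonneg _) ((div_le_one (by positivity)).mpr (by linarith))
  obtain ⟨T, hT⟩ := eventually_atTop.mp <| (eventually_atTop.mpr hdiff).and <|
    (hlim.eventually (gt_mem_nhds hε)).and (eventually_ge_atTop 1)
  have hT1 : ∀ t, T ≤ t → 1 ≤ t := fun t ht => (hT t ht).2.2
  have hanti := antitoneOn_sq_log_sub_mul_log (f := η) (ε := ε) (by linarith [hT1 T le_rfl])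
    (fun t ht => (hT t ht).1) (fun t ht => hpos t (by linarith [hT1 t ht]))
    (fun t ht => (hT t ht).2.1.le)
  filter_upwards [eventually_ge_atTop T] with t ht
  have ht0 : 0 < t := by linarith [hT1 t ht]
  have hLt : t ≤ L * t := le_mul_of_one_le_left ht0.le hL
  have hmono := hanti ht (ht.trans hLt) hLt
  simp only [log_mul (by positivity : L ≠ 0) ht0.ne'] at hmono
  have hsq : log (η (L * t)) ^ 2 ≤ (log (η t) + log r) ^ 2 := by
    nlinarith [hlogη t ht0.le]
  have hlog : log (η (L * t)) ≤ log (η t) + log r :=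
    (le_abs_self _).trans (abs_le_of_sq_le_sq hsq (by linarith [hlogη t ht0.le]))
  rwa [← log_le_log_iff (hpos _ (by positivity)) (mul_pos (by linarith) (hpos t ht0.le)),
    log_mul (by positivity) (hpos t ht0.le).ne', add_comm (log r)]

theorem one_div_div_one_div_le_two {k L₂ x y : ℝ} (hk : 3 ≤ k) (hL₂ : 0 < L₂) (hx : 0 ≤ x)
    (hxy : y ≤ 3 / 2 * x) :
    1 / (k * L₂ * (x + 1)) / (1 / ((k + 1) * L₂ * (y + 1))) ≤ 2 := by
  rw [one_div, one_div, inv_div_inv, div_le_iff₀ (by positivity)]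
  calc (k + 1) * L₂ * (y + 1) ≤ (k + 1) * L₂ * (3 / 2 * (x + 1)) := by
        gcongr; linarith
    _ ≤ (4 / 3 * k) * L₂ * (3 / 2 * (x + 1)) := by gcongr; linarith
    _ = 2 * (k * L₂ * (x + 1)) := by ring

/-- Inequality (3.1): with `a_k = 1/(k·L₂·(η(L^k)+1))`, there is an integer `k₁ ≥ 4`
such that `a_k/a_{k+1} ≤ 2` for every `k ≥ k₁`. -/
theorem statement13 (φ η : ℝ → ℝ) (Lam0 : ℝ) (hφ : PhiHyp φ η Lam0)
    (L L₂ : ℝ) (hL : 1 < L) (hL₂ : 0 < L₂) :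
    ∃ k₁ : ℕ, 4 ≤ k₁ ∧ ∀ k : ℕ, k₁ ≤ k →
      (1 / ((k : ℝ) * L₂ * (η (L ^ k) + 1))) /
        (1 / (((k : ℝ) + 1) * L₂ * (η (L ^ (k + 1)) + 1))) ≤ 2 := by
  obtain ⟨-, hη, -, -, -, -, -, hdiff, hlim, -, -⟩ := hφ
  have hstep : ∀ᶠ k : ℕ in atTop, η (L ^ (k + 1)) ≤ 3 / 2 * η (L ^ k) := by
    simpa only [pow_succ'] using (tendsto_pow_atTop_atTop_of_one_lt hL).eventually
      (eventually_le_mul_of_tendsto_mul_deriv_mul_log hη hdiff hlim hL.le (by norm_num))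
  obtain ⟨k₁, hk₁⟩ := eventually_atTop.mp hstep
  refine ⟨max k₁ 4, le_max_right _ _, fun k hk => ?_⟩
  have hk3 : (3 : ℝ) ≤ k := by exact_mod_cast (by omega : 3 ≤ k)
  have hηk : 0 ≤ η (L ^ k) := zero_le_one.trans (hη _ (by positivity))
  exact one_div_div_one_div_le_two hk3 hL₂ hηk (hk₁ k (le_of_max_le_left hk))
end

section
/- Define u : ℝ×ℝ → ℝ by u(x,t) = e^{1/t}·(x+3) for t < 0 and u(x,t) = 0 for t ≥ 0, and let φ(s) = 5s·(|ln s| + 4)² for s > 0 with φ(0) = 0. Then u is smooth on {(x,t) : t < 0} with ∂_x u(x,t) = e^{1/t}, ∂_{xx} u(x,t) = 0 and ∂_t u(x,t) = −e^{1/t}(x+3)/t², and for every (x,t) with −2 < x < 2 and t < 0 one has 0 ≤ ∂_{xx}u(x,t) − ∂_t u(x,t) = e^{1/t}(x+3)/t² ≤ 5·e^{1/t}·(4 − 1/t)² = φ(|∂_x u(x,t)|); in particular −φ(|∂_x u|) ≤ ∂_{xx}u − ∂_t u ≤ φ(|∂_x u|) on (−2,2)×(−∞,0). -/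
open Real

/-- The explicit function `u(x,t) = e^{1/t}(x+3)` for `t < 0`, `u = 0` for `t ≥ 0`. -/
noncomputable def uEx (x t : ℝ) : ℝ := if t < 0 then Real.exp (1 / t) * (x + 3) else 0

/-- The explicit nonlinearity `φ(s) = 5s(|ln s| + 4)²` (with `φ(0) = 0`). -/
noncomputable def phiEx (s : ℝ) : ℝ := if s = 0 then 0 else 5 * s * (|Real.log s| + 4) ^ 2

lemma uEx_derivx (t : ℝ) (ht : t < 0) (x : ℝ) :
    deriv (fun y => uEx y t) x = Real.exp (1/t) := by
  have : (fun y => uEx y t) = fun y => Real.exp (1/t) * (y + 3) := by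
    funext y; simp [uEx, if_pos ht]
  rw [this]; simp

lemma uEx_derivxx (t : ℝ) (ht : t < 0) (x : ℝ) :
    deriv (fun y => deriv (fun z => uEx z t) y) x = 0 := by
  have : (fun y => deriv (fun z => uEx z t) y) = fun _ => Real.exp (1/t) := by
    funext y; exact uEx_derivx t ht y
  rw [this]; simp

lemma uEx_derivt (x t : ℝ) (ht : t < 0) :
    deriv (fun s => uEx x s) t = -(Real.exp (1 / t) * (x + 3) / t ^ 2) := by
  have h1 : HasDerivAt (fun s : ℝ => Real.exp (1/s) * (x + 3))
      (-(Real.exp (1 / t) * (x + 3) / t ^ 2)) t := by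
    have hi : HasDerivAt (fun s : ℝ => 1/s) (-(t^2)⁻¹) t := by
      simpa [one_div] using hasDerivAt_inv ht.ne
    have := hi.exp.mul_const (x + 3)
    exact this.congr_deriv (by ring)
  have h2 : deriv (fun s => uEx x s) t = deriv (fun s : ℝ => Real.exp (1/s) * (x + 3)) t := by
    apply Filter.EventuallyEq.deriv_eq
    filter_upwards [Iio_mem_nhds ht] with s hs
    simp only [uEx, if_pos (show s < 0 from hs)]
  rw [h2, h1.deriv]

lemma uEx_smooth : ContDiffOn ℝ (⊤ : ℕ∞) (fun p : ℝ × ℝ => uEx p.1 p.2) {p : ℝ × ℝ | p.2 < 0} := by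
  have h : ContDiffOn ℝ (⊤ : ℕ∞) (fun p : ℝ × ℝ => Real.exp (1/p.2) * (p.1 + 3))
      {p : ℝ × ℝ | p.2 < 0} := by
    apply ContDiffOn.mul
    · apply Real.contDiff_exp.comp_contDiffOn
      exact contDiffOn_const.div contDiffOn_snd (fun p hp => ne_of_lt hp)
    · exact contDiffOn_fst.add contDiffOn_const
  exact h.congr (fun p hp => by simp only [uEx, if_pos (show p.2 < 0 from hp)])

/-- The example of Section 2: `u(x,t) = e^{1/t}(x+3)` (for `t < 0`) is smooth for `t < 0`,
with `u_x = e^{1/t}`, `u_{xx} = 0`, `u_t = −e^{1/t}(x+3)/t²`, and for `−2 < x < 2`, `t < 0`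
it satisfies `0 ≤ u_{xx} − u_t = e^{1/t}(x+3)/t² ≤ 5e^{1/t}(4 − 1/t)² = φ(|u_x|)`;
in particular `−φ(|u_x|) ≤ u_{xx} − u_t ≤ φ(|u_x|)` on `(−2,2)×(−∞,0)`. -/
theorem statement14 :
    ContDiffOn ℝ (⊤ : ℕ∞) (fun p : ℝ × ℝ => uEx p.1 p.2) {p : ℝ × ℝ | p.2 < 0} ∧
    (∀ x t : ℝ, t < 0 →
      deriv (fun y => uEx y t) x = Real.exp (1 / t) ∧
      deriv (fun y => deriv (fun z => uEx z t) y) x = 0 ∧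
      deriv (fun s => uEx x s) t = -(Real.exp (1 / t) * (x + 3) / t ^ 2)) ∧
    (∀ x t : ℝ, -2 < x → x < 2 → t < 0 →
      0 ≤ deriv (fun y => deriv (fun z => uEx z t) y) x - deriv (fun s => uEx x s) t ∧
      deriv (fun y => deriv (fun z => uEx z t) y) x - deriv (fun s => uEx x s) t =
        Real.exp (1 / t) * (x + 3) / t ^ 2 ∧
      Real.exp (1 / t) * (x + 3) / t ^ 2 ≤ 5 * Real.exp (1 / t) * (4 - 1 / t) ^ 2 ∧
      5 * Real.exp (1 / t) * (4 - 1 / t) ^ 2 = phiEx |deriv (fun y => uEx y t) x| ∧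
      -phiEx |deriv (fun y => uEx y t) x| ≤
        deriv (fun y => deriv (fun z => uEx z t) y) x - deriv (fun s => uEx x s) t ∧
      deriv (fun y => deriv (fun z => uEx z t) y) x - deriv (fun s => uEx x s) t ≤
        phiEx |deriv (fun y => uEx y t) x|) := by
  refine ⟨uEx_smooth, fun x t ht => ⟨uEx_derivx t ht x, uEx_derivxx t ht x, uEx_derivt x t ht⟩,
    fun x t hx1 hx2 ht => ?_⟩
  have he : 0 < Real.exp (1/t) := Real.exp_pos _
  have ht2 : 0 < t^2 := pow_two_pos_of_ne_zero ht.ne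
  have heq : deriv (fun y => deriv (fun z => uEx z t) y) x - deriv (fun s => uEx x s) t =
      Real.exp (1 / t) * (x + 3) / t ^ 2 := by
    rw [uEx_derivxx t ht x, uEx_derivt x t ht]; ring
  have hx3 : (0:ℝ) < x + 3 := by linarith
  have hpos : 0 ≤ Real.exp (1 / t) * (x + 3) / t ^ 2 := by positivity
  have hle : Real.exp (1 / t) * (x + 3) / t ^ 2 ≤ 5 * Real.exp (1 / t) * (4 - 1 / t) ^ 2 := by
    rw [div_le_iff₀ ht2]
    have h1 : (4 - 1/t)^2 * t^2 = (4*t - 1)^2 := by field_simp [ht.ne]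
    nlinarith [sq_nonneg (4*t-1), mul_pos he ht2, sq_nonneg (2*t-1), sq_nonneg (4*t)]
  have hphi : 5 * Real.exp (1 / t) * (4 - 1 / t) ^ 2 = phiEx |deriv (fun y => uEx y t) x| := by
    rw [uEx_derivx t ht x, abs_of_pos he, phiEx,
      if_neg (Real.exp_ne_zero _), Real.log_exp,
      abs_of_nonpos (le_of_lt (div_neg_of_pos_of_neg one_pos ht))]
    ring
  refine ⟨heq ▸ hpos, heq, hle, hphi, ?_, ?_⟩
  · calc -phiEx |deriv (fun y => uEx y t) x| ≤ 0 := by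
          rw [← hphi]
          have : 0 ≤ 5 * Real.exp (1/t) * (4 - 1/t)^2 := by positivity
          linarith
      _ ≤ _ := heq ▸ hpos
  · rw [heq, ← hphi]; exact hle
end
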